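/- Let d, D, L be positive integers. Let A₁,…,A_d be D×D complex matrices with ∑_i A_i A_i† = 𝟙, and let Λ be a D×D positive semidefinite matrix with tr Λ = 1 and ∑_i A_i† Λ A_i = Λ. Let P be an orthogonal projection with PΛ = ΛP; set Λ̃ = PΛP and δ = tr(Λ − Λ̃). Let ρ_A^L be the d^L×d^L matrix with entries (ρ_A^L)_{(i₁…i_L),(j₁…j_L)} = tr(A_{j_L}†⋯A_{j_1}† Λ A_{i_1}⋯A_{i_L}) and σ_A the d^L×d^L matrix with entries tr(A_{j_L}†⋯A_{j_1}† Λ̃ A_{i_1}⋯A_{i_L}). Then ρ_A^L − σ_A is positive semidefinite and ‖ρ_A^L − σ_A‖₁ = δ. -/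

import Mathlib

open Matrix ComplexOrder

/-- The trace norm (sum of singular values) of a complex square matrix, defined as the
trace of the positive semidefinite square root of `Mᴴ * M`. -/
noncomputable def traceNorm {n : Type*} [Fintype n] [DecidableEq n]
    (M : Matrix n n ℂ) : ℝ :=
  (((Matrix.posSemidef_conjTranspose_mul_self M).1.eigenvectorUnitary : Matrix n n ℂ) *
    diagonal (((↑) : ℝ → ℂ) ∘ Real.sqrt ∘ (Matrix.posSemidef_conjTranspose_mul_self M).1.eigenvalues) *
    (star (Matrix.posSemidef_conjTranspose_mul_self M).1.eigenvectorUnitary : Matrix n n ℂ)).trace.re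

/-- The `d^L × d^L` matrix with entries
`tr (A_{j_L}ᴴ ⋯ A_{j_1}ᴴ * Λ * A_{i_1} ⋯ A_{i_L})`, indexed by multi-indices:
the (unnormalized) `L`-site reduced density matrix of the MPS generated by `A`
with boundary matrix `Λ`. -/
noncomputable def reducedDM (d D L : ℕ) (A : Fin d → Matrix (Fin D) (Fin D) ℂ)
    (Λ : Matrix (Fin D) (Fin D) ℂ) :
    Matrix (Fin L → Fin d) (Fin L → Fin d) ℂ :=
  fun i j =>
    (((List.ofFn fun t => A (j t)).prod)ᴴ * Λ * (List.ofFn fun t => A (i t)).prod).trace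

/-!
The map `Λ ↦ ρ_A^L(Λ)` is linear, positive (its quadratic form at `x` is `tr (Xᴴ Λ X)` with
`X = ∑ x̄_w A_w`) and trace preserving, because the words `A_w` of length
`L` again satisfy `∑ A_w A_wᴴ = 𝟙`. Since `P` commutes with `Λ`, `Λ - PΛP = (𝟙 - P) Λ (𝟙 - P)`
is positive semidefinite, hence so is `ρ_A^L - σ_A = ρ_A^L(Λ - PΛP)`, and the trace norm of a
positive semidefinite matrix is its trace.
-/

open scoped MatrixOrder in
theorem traceNorm_of_posSemidef {n : Type*} [Fintype n] [DecidableEq n]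
    {M : Matrix n n ℂ} (hM : M.PosSemidef) : traceNorm M = M.trace.re := by
  have hMM := Matrix.posSemidef_conjTranspose_mul_self M
  have hsqrt : cfc Real.sqrt (Mᴴ * M) = M := by
    rw [← cfcₙ_eq_cfc (hf0 := Real.sqrt_zero), ← CFC.sqrt_eq_real_sqrt _ hMM.nonneg,
      hM.isHermitian.eq, CFC.sqrt_mul_self M hM.nonneg]
  calc traceNorm M = (cfc Real.sqrt (Mᴴ * M)).trace.re := by
        rw [traceNorm, hMM.1.cfc_eq, IsHermitian.cfc, Unitary.conjStarAlgAut_apply]; rfl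
    _ = M.trace.re := by rw [hsqrt]

theorem sum_ofFn_prod_mul_star_ofFn_prod {R ι : Type*} [Semiring R] [StarRing R] [Fintype ι]
    (A : ι → R) (hA : ∑ i, A i * star (A i) = 1) (L : ℕ) :
    ∑ w : Fin L → ι,
      (List.ofFn fun t => A (w t)).prod * star (List.ofFn fun t => A (w t)).prod = 1 := by
  induction L with
  | zero => simp
  | succ L ih =>
    rw [← (Fin.consEquiv fun _ : Fin (L + 1) => ι).sum_comp, Fintype.sum_prod_type]
    calc _ = ∑ i, A i * (∑ w : Fin L → ι, (List.ofFn fun t => A (w t)).prod *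
              star (List.ofFn fun t => A (w t)).prod) * star (A i) := by
          refine Finset.sum_congr rfl fun i _ => ?_
          simp only [Finset.mul_sum, Finset.sum_mul, Fin.consEquiv_apply, List.ofFn_succ,
            Fin.cons_zero, Fin.cons_succ, List.prod_cons, star_mul, mul_assoc]
      _ = 1 := by simpa [ih] using hA

section reducedDM

variable {d D L : ℕ} (A : Fin d → Matrix (Fin D) (Fin D) ℂ)

theorem reducedDM_sub (Λ M : Matrix (Fin D) (Fin D) ℂ) :
    reducedDM d D L A Λ - reducedDM d D L A M = reducedDM d D L A (Λ - M) := by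
  ext i j
  simp [reducedDM, Matrix.sub_mul, Matrix.mul_sub, Matrix.trace_sub]

theorem reducedDM_posSemidef {M : Matrix (Fin D) (Fin D) ℂ} (hM : M.PosSemidef) :
    (reducedDM d D L A M).PosSemidef := by
  set W : (Fin L → Fin d) → Matrix (Fin D) (Fin D) ℂ :=
    fun w => (List.ofFn fun t => A (w t)).prod
  have hρ : reducedDM d D L A M = fun i j => ((W j)ᴴ * M * W i).trace := rfl
  rw [posSemidef_iff_dotProduct_mulVec]
  constructor
  · ext i j
    rw [Matrix.conjTranspose_apply, hρ, ← Matrix.trace_conjTranspose]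
    simp [Matrix.conjTranspose_mul, Matrix.mul_assoc, hM.isHermitian.eq]
  · intro x
    have hform : star x ⬝ᵥ reducedDM d D L A M *ᵥ x =
        ((∑ w, star (x w) • W w)ᴴ * M * ∑ w, star (x w) • W w).trace := by
      simp only [Matrix.conjTranspose_sum, Matrix.conjTranspose_smul, star_star,
        Matrix.sum_mul, Matrix.smul_mul, Matrix.mul_smul, Matrix.trace_sum,
        Matrix.trace_smul, dotProduct, Matrix.mulVec, hρ, smul_eq_mul, Pi.star_apply,
        Finset.mul_sum]
      exact Finset.sum_congr rfl fun _ _ => Finset.sum_congr rfl fun _ _ => by ring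
    rw [hform]
    exact (hM.conjTranspose_mul_mul_same _).trace_nonneg

theorem reducedDM_trace (hA : ∑ i, A i * (A i)ᴴ = 1) (M : Matrix (Fin D) (Fin D) ℂ) :
    (reducedDM d D L A M).trace = M.trace := by
  have hwords := sum_ofFn_prod_mul_star_ofFn_prod A hA L
  simp only [Matrix.star_eq_conjTranspose] at hwords
  calc (reducedDM d D L A M).trace
      = ((∑ w : Fin L → Fin d, (List.ofFn fun t => A (w t)).prod *
          ((List.ofFn fun t => A (w t)).prod)ᴴ) * M).trace := by
        rw [Finset.sum_mul, Matrix.trace_sum]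
        exact Finset.sum_congr rfl fun w _ =>
          Matrix.trace_mul_cycle ((List.ofFn fun t => A (w t)).prod)ᴴ M _
    _ = M.trace := by rw [hwords, Matrix.one_mul]

end reducedDM

theorem sub_mul_mul_eq_conjTranspose_one_sub_mul_mul {n : Type*} [Fintype n] [DecidableEq n]
    {Λ P : Matrix n n ℂ} (hP : Pᴴ = P) (hP2 : P * P = P) (hPΛ : P * Λ = Λ * P) :
    Λ - P * Λ * P = (1 - P)ᴴ * Λ * (1 - P) := by
  have hPΛP : P * Λ * P = P * Λ := by rw [hPΛ, Matrix.mul_assoc, hP2]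
  rw [Matrix.conjTranspose_sub, hP, Matrix.conjTranspose_one]
  simp only [Matrix.sub_mul, Matrix.mul_sub, Matrix.one_mul, Matrix.mul_one, hPΛP, ← hPΛ]
  abel

theorem reducedDM_projected_boundary_difference_general
    (d D L : ℕ)
    (A : Fin d → Matrix (Fin D) (Fin D) ℂ)
    (Λ : Matrix (Fin D) (Fin D) ℂ) (hΛ : Λ.PosSemidef)
    (hA : ∑ i, A i * (A i)ᴴ = 1)
    (P : Matrix (Fin D) (Fin D) ℂ)
    (hP : Pᴴ = P) (hP2 : P * P = P) (hPΛ : P * Λ = Λ * P) :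
    (reducedDM d D L A Λ - reducedDM d D L A (P * Λ * P)).PosSemidef ∧
    traceNorm (reducedDM d D L A Λ - reducedDM d D L A (P * Λ * P)) =
      (Λ - P * Λ * P).trace.re := by
  have hδ : (Λ - P * Λ * P).PosSemidef := by
    rw [sub_mul_mul_eq_conjTranspose_one_sub_mul_mul hP hP2 hPΛ]
    exact hΛ.conjTranspose_mul_mul_same _
  rw [reducedDM_sub]
  have hΔ := reducedDM_posSemidef (L := L) A hδ
  exact ⟨hΔ, by rw [traceNorm_of_posSemidef hΔ, reducedDM_trace A hA]⟩

/-- `ρ_A^L − σ_A` is positive semidefinite and `‖ρ_A^L − σ_A‖₁ = δ`,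
where `σ_A` is the reduced density matrix built from `Λ̃ = PΛP` and `δ = tr(Λ − Λ̃)`. -/
theorem reducedDM_projected_boundary_difference
    (d D L : ℕ) (hd : 0 < d) (hD : 0 < D) (hL : 0 < L)
    (A : Fin d → Matrix (Fin D) (Fin D) ℂ)
    (Λ : Matrix (Fin D) (Fin D) ℂ) (hΛ : Λ.PosSemidef) (htr : Λ.trace = 1)
    (hA : ∑ i, A i * (A i)ᴴ = 1)
    (hfix : ∑ i, (A i)ᴴ * Λ * A i = Λ)
    (P : Matrix (Fin D) (Fin D) ℂ)
    (hP : Pᴴ = P) (hP2 : P * P = P) (hPΛ : P * Λ = Λ * P) :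
    (reducedDM d D L A Λ - reducedDM d D L A (P * Λ * P)).PosSemidef ∧
    traceNorm (reducedDM d D L A Λ - reducedDM d D L A (P * Λ * P)) =
      (Λ - P * Λ * P).trace.re :=
  reducedDM_projected_boundary_difference_general d D L A Λ hΛ hA P hP hP2 hPΛ
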